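/- For every graph G and every integer d ≥ 2, the picture space X^d(G) is path-connected. -/

import Mathlib

open scoped Classical LinearAlgebra.Projectivization
open CategoryTheory

noncomputable section




/-- A finite multigraph: a nonempty finite vertex type, a finite edge type,
and an assignment of an unordered pair of endpoints to each edge. -/
structure Multigraph where
  V : Type
  E : Type
  [fintypeV : Fintype V]
  [fintypeE : Fintype E]
  [nonemptyV : Nonempty V]
  ends : E → Sym2 V

attribute [instance] Multigraph.fintypeV Multigraph.fintypeE Multigraph.nonemptyV

namespace Multigraph

/-- An edge is a loop if its two endpoints coincide. -/
def IsLoop (G : Multigraph) (e : G.E) : Prop := (G.ends e).IsDiag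

/-- Adjacency relation using only the edges in the set `F`. -/
def adjOn (G : Multigraph) (F : Set G.E) (u u' : G.V) : Prop :=
  ∃ e ∈ F, G.ends e = s(u, u')

/-- The number of connected components of the spanning subgraph `(V, F)`. -/
def ccCount (G : Multigraph) (F : Set G.E) : ℕ :=
  Nat.card (Quotient (Relation.EqvGen.setoid (G.adjOn F)))

/-- The number of connected components of `G`. -/
def c (G : Multigraph) : ℕ := G.ccCount Set.univ

/-- The rank of an edge set `F`: `|V| - c(F)`. -/
def rk (G : Multigraph) (F : Set G.E) : ℕ := Fintype.card G.V - G.ccCount F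

/-- An edge is an isthmus if deleting it increases the number of components. -/
def IsIsthmus (G : Multigraph) (e : G.E) : Prop :=
  G.ccCount {e' | e' ≠ e} = G.c + 1

/-- The Tutte polynomial of `G`, evaluated at `(x, y)` in a commutative ring,
via the corank-nullity generating function. -/
def tutte (G : Multigraph) {R : Type*} [CommRing R] (x y : R) : R :=
  ∑ F : Finset G.E,
    (x - 1) ^ (G.rk Set.univ - G.rk (F : Set G.E)) * (y - 1) ^ (F.card - G.rk (F : Set G.E))

/-- Deletion of an edge. -/
def deleteEdge (G : Multigraph) (e : G.E) : Multigraph where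
  V := G.V
  E := {e' : G.E // e' ≠ e}
  ends := fun e' => G.ends e'.1

/-- Contraction of a nonloop edge `e` with endpoints `v ≠ w`: the vertex `w` is
identified with `v` (the merged vertex), and `e` is removed. -/
def contractEdge (G : Multigraph) (e : G.E) {v w : G.V} (hvw : v ≠ w) : Multigraph where
  V := {u : G.V // u ≠ w}
  E := {e' : G.E // e' ≠ e}
  nonemptyV := ⟨⟨v, hvw⟩⟩
  ends := fun e' => (G.ends e'.1).map
    (fun u => if h : u = w then ⟨v, hvw⟩ else ⟨u, h⟩)

/-- The quotient-by-contraction map on vertices: `w ↦ v` and every other vertex to itself. -/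
def contractMap (G : Multigraph) {v w : G.V} (hvw : v ≠ w) : G.V → {u : G.V // u ≠ w} :=
  fun u => if h : u = w then ⟨v, hvw⟩ else ⟨u, h⟩

/-- The merged vertex of a contraction. -/
def mergedVertex (G : Multigraph) {v w : G.V} (hvw : v ≠ w) : {u : G.V // u ≠ w} :=
  ⟨v, hvw⟩

end Multigraph





/-- The topology on a projectivization: the quotient topology from nonzero vectors. -/
instance projSpaceTopology (K V : Type*) [DivisionRing K] [AddCommGroup V] [Module K V]
    [TopologicalSpace V] : TopologicalSpace (ℙ K V) :=
  instTopologicalSpaceQuotient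

/-- Complex projective `d`-space, with its classical (Euclidean) topology. -/
abbrev CP (d : ℕ) := ℙ ℂ (Fin (d + 1) → ℂ)

/-- The Grassmannian of projective lines in `ℂP^d`: 2-dimensional linear subspaces
of `ℂ^{d+1}`. -/
def ProjLine (d : ℕ) := {W : Submodule ℂ (Fin (d + 1) → ℂ) // Module.finrank ℂ W = 2}

/-- The topology on the Grassmannian of lines: the quotient topology from the space of
linearly independent pairs of vectors, via the span map. -/
instance (d : ℕ) : TopologicalSpace (ProjLine d) :=
  TopologicalSpace.coinduced
    (fun p : {f : Fin 2 → (Fin (d + 1) → ℂ) // LinearIndependent ℂ f} =>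
      (⟨Submodule.span ℂ (Set.range p.1), by
        simpa using finrank_span_eq_card p.2⟩ : ProjLine d))
    inferInstance

/-- A point of `ℂP^d` lies on a projective line. -/
def memLine {d : ℕ} (x : CP d) (L : ProjLine d) : Prop :=
  x.submodule ≤ L.1


/-- A picture of the graph `G` in `ℂP^d`: a point for each vertex, a (projective) line for
each edge, such that the point at each endpoint of an edge lies on the line of that edge. -/
structure Picture (G : Multigraph) (d : ℕ) where
  pt : G.V → CP d
  line : G.E → ProjLine d
  mem : ∀ e : G.E, ∀ v ∈ G.ends e, memLine (pt v) (line e)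

/-- The picture space `X^d(G)`, topologized as a subspace of
`(ℂP^d)^V × Gr(2, ℂ^{d+1})^E`. -/
instance (G : Multigraph) (d : ℕ) : TopologicalSpace (Picture G d) :=
  TopologicalSpace.induced
    (fun P : Picture G d => ((P.pt, P.line) : (G.V → CP d) × (G.E → ProjLine d)))
    inferInstance

namespace Picture

variable {G : Multigraph} {d : ℕ}

/-- The forgetful map `X^d(G) → X^d(G−e)` dropping the line at `e`. -/
def del (e : G.E) (P : Picture G d) : Picture (G.deleteEdge e) d where
  pt := P.pt
  line := fun e' => P.line e'.1
  mem := fun e' v hv => P.mem e'.1 v hv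

/-- The natural injection `X^d(G/e) → X^d(G−e)` associated to the contraction of a
nonloop edge `e` with endpoints `v ≠ w`: both `v` and `w` are assigned the point at
the merged vertex. -/
def ofContract (e : G.E) {v w : G.V} (hvw : v ≠ w)
    (Q : Picture (G.contractEdge e hvw) d) : Picture (G.deleteEdge e) d where
  pt := fun u => Q.pt (G.contractMap hvw u)
  line := fun e' => Q.line e'
  mem := fun e' u hu =>
    Q.mem e' (G.contractMap hvw u) (Sym2.mem_map.2 ⟨u, hu, rfl⟩)

/-- The coincidence locus `Z_e(G)` (for `e` with endpoints `v, w`): pictures with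
`P(v) = P(w)`, as a subspace of the picture space. -/
def coincLocus (G : Multigraph) (d : ℕ) (v w : G.V) : Type :=
  {P : Picture G d // P.pt v = P.pt w}

instance (G : Multigraph) (d : ℕ) (v w : G.V) : TopologicalSpace (coincLocus G d v w) :=
  instTopologicalSpaceSubtype

/-- The contraction map `π : Z_e(G) → X^d(G/e)`: forget the line at `e` and remember the
common point of `v` and `w` at the merged vertex. -/
def contractOfCoinc (e : G.E) {v w : G.V} (hvw : v ≠ w)
    (P : coincLocus G d v w) : Picture (G.contractEdge e hvw) d where
  pt := fun u => P.1.pt u.1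
  line := fun e' => P.1.line e'.1
  mem := by
    intro e' u hu
    rcases Sym2.mem_map.1 hu with ⟨b, hb, hbu⟩
    have : P.1.pt u.1 = P.1.pt b := by
      by_cases h : b = w
      · subst h
        have : u = G.mergedVertex hvw := by
          simpa [Multigraph.contractMap, Multigraph.mergedVertex] using hbu.symm
        rw [this]
        exact P.2
      · have : u = ⟨b, h⟩ := by simpa [Multigraph.contractMap, h] using hbu.symm
        rw [this]
    show memLine (P.1.pt u.1) (P.1.line e'.1)
    rw [this]
    exact P.1.mem e'.1 b hb

end Picture


namespace Picture

variable {G : Multigraph} {d : ℕ}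

lemma continuous_data :
    Continuous (fun P : Picture G d =>
      ((P.pt, P.line) : (G.V → CP d) × (G.E → ProjLine d))) :=
  continuous_induced_dom

lemma continuous_pt : Continuous (fun P : Picture G d => P.pt) :=
  continuous_data.fst

lemma continuous_line : Continuous (fun P : Picture G d => P.line) :=
  continuous_data.snd

lemma continuous_mk {X : Type*} [TopologicalSpace X] (f : X → Picture G d)
    (h1 : Continuous fun x => (f x).pt) (h2 : Continuous fun x => (f x).line) :
    Continuous f :=
  continuous_induced_rng.2 (h1.prodMk h2)

/-- The forgetful map `X^d(G) → X^d(G−e)`, as a continuous map. -/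
def delCM (e : G.E) : C(Picture G d, Picture (G.deleteEdge e) d) where
  toFun := del e
  continuous_toFun := by
    apply continuous_mk
    · exact continuous_pt
    · exact continuous_pi fun e' => (continuous_apply e'.1).comp continuous_line

/-- The embedding `X^d(G/e) → X^d(G−e)`, as a continuous map. -/
def ofContractCM (e : G.E) {v w : G.V} (hvw : v ≠ w) :
    C(Picture (G.contractEdge e hvw) d, Picture (G.deleteEdge e) d) where
  toFun := ofContract e hvw
  continuous_toFun := by
    apply continuous_mk
    · exact continuous_pi fun u => (continuous_apply (G.contractMap hvw u)).comp continuous_pt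
    · exact continuous_pi fun e' => (continuous_apply e').comp continuous_line

/-- The inclusion `Z_e(G) → X^d(G)`, as a continuous map. -/
def coincInclCM (v w : G.V) : C(coincLocus G d v w, Picture G d) :=
  ⟨Subtype.val, continuous_subtype_val⟩

/-- The projection `π : Z_e(G) → X^d(G/e)`, as a continuous map. -/
def contractOfCoincCM (e : G.E) {v w : G.V} (hvw : v ≠ w) :
    C(coincLocus G d v w, Picture (G.contractEdge e hvw) d) where
  toFun := contractOfCoinc e hvw
  continuous_toFun := by
    apply continuous_mk
    · exact continuous_pi fun u =>
        (continuous_apply u.1).comp (continuous_pt.comp continuous_subtype_val)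
    · exact continuous_pi fun e' =>
        (continuous_apply e'.1).comp (continuous_line.comp continuous_subtype_val)

end Picture

/-- `G` is a simple graph: no loops, and distinct edges have distinct endpoint pairs. -/
def Multigraph.IsSimple (G : Multigraph) : Prop :=
  (∀ e, ¬ G.IsLoop e) ∧ Function.Injective G.ends

/-- A picture is generic if distinct vertices are assigned distinct points. -/
def Picture.IsGeneric {G : Multigraph} {d : ℕ} (P : Picture G d) : Prop :=
  Function.Injective P.pt

/-- The picture variety `PV^d(G)`: the closure in `X^d(G)` of the set of generic
pictures. -/
def PictureVariety (G : Multigraph) (d : ℕ) : Set (Picture G d) :=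
  closure {P : Picture G d | P.IsGeneric}

/-- `G` is an orchard: every edge is a loop or an isthmus. -/
def Multigraph.IsOrchard (G : Multigraph) : Prop :=
  ∀ e : G.E, G.IsLoop e ∨ G.IsIsthmus e





/-- The singular chain complex functor `TopCat ⥤ ChainComplex AddCommGrp ℕ`:
free abelian groups on the singular simplicial set, with alternating face map
differentials. -/
def singularChainComplexFunctor : TopCat ⥤ ChainComplex AddCommGrpCat ℕ :=
  TopCat.toSSet ⋙ ((SimplicialObject.whiskering _ _).obj AddCommGrpCat.free) ⋙
    AlgebraicTopology.alternatingFaceMapComplex AddCommGrpCat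

/-- The `n`-th singular homology functor with integer coefficients. -/
def singularHomologyFunctor (n : ℕ) : TopCat ⥤ AddCommGrpCat :=
  singularChainComplexFunctor ⋙ HomologicalComplex.homologyFunctor AddCommGrpCat _ n

/-- The `n`-th singular homology group `H_n(X; ℤ)` of a topological space. -/
def SH (n : ℕ) (X : Type) [TopologicalSpace X] : AddCommGrpCat :=
  (singularHomologyFunctor n).obj (TopCat.of X)

/-- The map induced on singular homology by a continuous map. -/
def SHmap (n : ℕ) {X Y : Type} [TopologicalSpace X] [TopologicalSpace Y] (f : C(X, Y)) :
    SH n X ⟶ SH n Y :=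
  (singularHomologyFunctor n).map (X := TopCat.of X) (Y := TopCat.of Y) (TopCat.ofHom f)

/-- The rank of the `n`-th integral singular homology group. -/
def shRank (n : ℕ) (X : Type) [TopologicalSpace X] : ℕ :=
  Module.finrank ℤ (SH n X)

/-- The compressed Poincaré series `Σ_i rank H_{2i}(X;ℤ) qⁱ` of a space, as a formal
power series. -/
def cPoin (X : Type) [TopologicalSpace X] : PowerSeries ℤ :=
  PowerSeries.mk fun i => (shRank (2 * i) X : ℤ)

/-- The `q`-analogue `[n]_q = 1 + q + ⋯ + q^{n-1}` as an integer polynomial. -/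
def qa (n : ℕ) : Polynomial ℤ :=
  ∑ i ∈ Finset.range n, Polynomial.X ^ i

/-- `π : X → B` is a fiber bundle with fiber `F`: every point of the base has an open
neighborhood `U` with a trivializing homeomorphism `π⁻¹(U) ≃ U × F` over `U`. -/
def IsFiberBundleWithFiber {X B F : Type*} [TopologicalSpace X] [TopologicalSpace B]
    [TopologicalSpace F] (π : X → B) : Prop :=
  ∀ b : B, ∃ U : Set B, IsOpen U ∧ b ∈ U ∧
    ∃ φ : (π ⁻¹' U) ≃ₜ U × F, ∀ x : (π ⁻¹' U), ((φ x).1 : B) = π x.1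






/-- `X` admits the structure of a complex manifold of (complex) dimension `n`:
a charted space structure modeled on `ℂⁿ` whose transition maps are analytic. -/
def IsComplexManifoldOfDim (n : ℕ) (X : Type) [TopologicalSpace X] : Prop :=
  ∃ cs : ChartedSpace (EuclideanSpace ℂ (Fin n)) X,
    @IsManifold ℂ _ (EuclideanSpace ℂ (Fin n)) _ _ (EuclideanSpace ℂ (Fin n)) _
      (modelWithCornersSelf ℂ (EuclideanSpace ℂ (Fin n))) (⊤ : WithTop ℕ∞) X _ cs

/-- `X` admits the structure of a complex manifold. -/
def IsComplexManifold (X : Type) [TopologicalSpace X] : Prop :=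
  ∃ n, IsComplexManifoldOfDim n X



/-- The `q`-analogue `[n]_q` as a rational function over `ℚ`. -/
def qaQ (n : ℕ) : RatFunc ℚ :=
  ∑ i ∈ Finset.range n, (RatFunc.X : RatFunc ℚ) ^ i


/-!
Choose a linear functional `φ` vanishing at no vertex vector of a picture `P`, and `u` with
`φ u = 1`. The maps `A t x = (1 - t) • x + (t * φ x) • u` preserve `φ` and act on `ker φ` as the
scalar `1 - t`. Writing each edge line as `span {b, c}` with `φ c = 0`, the points `[A t x]` on the
lines `span {A t b, c}` form a path from `P` to a *pencil*: every vertex at `[u]`, every edge on a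
line through `[u]`. Two pencils are joined by turning their lines and sliding their centres along
paths that avoid a complex line of `ℂ^{d+1}`, whose complement has real codimension `2d ≥ 2` and is
therefore path-connected.
-/

open Module Submodule

section LinearAlgebra

variable {K V : Type*} [Field K] [AddCommGroup V] [Module K V]

theorem finrank_span_singleton_le_one (x : V) : finrank K (K ∙ x) ≤ 1 := by
  simpa using finrank_span_le_card (R := K) ({x} : Set V)

theorem span_singleton_ne_top [FiniteDimensional K V] (hV : 2 ≤ finrank K V) (x : V) :
    K ∙ x ≠ ⊤ := by
  intro h
  have := finrank_span_singleton_le_one (K := K) x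
  rw [h, finrank_top] at this
  omega

theorem exists_notMem_span_singleton_and [Infinite K] [FiniteDimensional K V]
    (hV : 2 ≤ finrank K V) (x y : V) : ∃ z, z ∉ K ∙ x ∧ z ∉ K ∙ y := by
  obtain ⟨z, hz⟩ := exists_forall_notMem_of_forall_ne_top ![K ∙ x, K ∙ y]
    (by simp [Fin.forall_fin_two, span_singleton_ne_top hV])
  exact ⟨z, hz 0, hz 1⟩

theorem notMem_span_singleton_symm {x y : V} (hy : y ≠ 0) (h : x ∉ K ∙ y) : y ∉ K ∙ x := by
  intro hyx
  obtain ⟨a, rfl⟩ := mem_span_singleton.1 hyx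
  have ha : a ≠ 0 := left_ne_zero_of_smul hy
  exact h (mem_span_singleton.2 ⟨a⁻¹, by rw [smul_smul, inv_mul_cancel₀ ha, one_smul]⟩)

theorem linearIndependent_pair_of_notMem_span {x y : V} (hx : x ≠ 0) (hy : y ∉ K ∙ x) :
    LinearIndependent K ![x, y] :=
  (LinearIndependent.pair_iff' hx).2 fun a h => hy (mem_span_singleton.2 ⟨a, h⟩)

theorem linearIndependent_pair_of_dual {φ : Dual K V} {x y : V} (hx : φ x ≠ 0) (hy : φ y = 0)
    (hy₀ : y ≠ 0) : LinearIndependent K ![x, y] := by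
  rw [LinearIndependent.pair_symm_iff, LinearIndependent.pair_iff' hy₀]
  intro a h
  apply hx
  rw [← h, map_smul, hy, smul_zero]

theorem exists_span_pair_eq_of_dual {L : Submodule K V} (hL : finrank K L = 2) {φ : Dual K V}
    {b : V} (hb : b ∈ L) (hφb : φ b ≠ 0) :
    ∃ c, φ c = 0 ∧ LinearIndependent K ![b, c] ∧ span K {b, c} = L := by
  have : FiniteDimensional K L := Module.finite_of_finrank_pos (by omega)
  have hlt : K ∙ b < L := by
    refine lt_of_le_of_ne ((span_singleton_le_iff_mem _ _).2 hb) fun h => ?_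
    have := finrank_span_singleton_le_one (K := K) b
    rw [h] at this
    omega
  obtain ⟨y, hyL, hyb⟩ := SetLike.exists_of_lt hlt
  set c := y - (φ y / φ b) • b
  have hc : φ c = 0 := by simp [c, div_mul_cancel₀ _ hφb]
  have hc₀ : c ≠ 0 := fun h => hyb (mem_span_singleton.2 ⟨φ y / φ b, (sub_eq_zero.1 h).symm⟩)
  have hbc := linearIndependent_pair_of_dual hφb hc hc₀
  refine ⟨c, hc, hbc, eq_of_le_of_finrank_eq (span_le.2 ?_) ?_⟩
  · exact Set.insert_subset_iff.2
      ⟨hb, Set.singleton_subset_iff.2 (L.sub_mem hyL (L.smul_mem _ hb))⟩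
  · rw [hL, ← Matrix.range_cons_cons_empty]
    simpa using finrank_span_eq_card hbc

end LinearAlgebra

theorem isPathConnected_compl_span_singleton {V : Type*} [NormedAddCommGroup V]
    [NormedSpace ℂ V] [FiniteDimensional ℂ V] (hV : 2 ≤ finrank ℂ V) (x : V) :
    IsPathConnected ((ℂ ∙ x : Set V)ᶜ) := by
  refine isPathConnected_compl_of_one_lt_codim (E := (ℂ ∙ x).restrictScalars ℝ) ?_
  have hsum := finrank_quotient_add_finrank ((ℂ ∙ x).restrictScalars ℝ)
  have hx : finrank ℝ ((ℂ ∙ x).restrictScalars ℝ) = 2 * finrank ℂ (ℂ ∙ x) :=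
    finrank_real_of_complex (ℂ ∙ x)
  rw [finrank_real_of_complex, hx] at hsum
  have := finrank_span_singleton_le_one (K := ℂ) x
  rw [← finrank_eq_rank]
  exact_mod_cast (by omega : 1 < finrank ℝ (V ⧸ (ℂ ∙ x).restrictScalars ℝ))

theorem Continuous.projectivization_mk {K W X : Type*} [DivisionRing K] [AddCommGroup W]
    [Module K W] [TopologicalSpace W] [TopologicalSpace X] {f : X → W} (hf : Continuous f)
    (h : ∀ x, f x ≠ 0) : Continuous fun x => Projectivization.mk K (f x) (h x) :=
  continuous_quot_mk.comp (hf.subtype_mk h)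

theorem memLine.rep_mem {d : ℕ} {x : CP d} {L : ProjLine d} (h : memLine x L) : x.rep ∈ L.1 :=
  h (by rw [Projectivization.submodule_eq]; exact mem_span_singleton_self _)

namespace ProjLine

variable {d : ℕ}

def ofPair (x y : Fin (d + 1) → ℂ) (h : LinearIndependent ℂ ![x, y]) : ProjLine d :=
  ⟨span ℂ (Set.range ![x, y]), by simpa using finrank_span_eq_card h⟩

theorem coe_ofPair (x y : Fin (d + 1) → ℂ) (h : LinearIndependent ℂ ![x, y]) :
    (ofPair x y h).1 = span ℂ {x, y} := by
  show span ℂ (Set.range ![x, y]) = _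
  rw [Matrix.range_cons_cons_empty]

theorem continuous_ofPair {X : Type*} [TopologicalSpace X] {f g : X → Fin (d + 1) → ℂ}
    (hf : Continuous f) (hg : Continuous g) (h : ∀ t, LinearIndependent ℂ ![f t, g t]) :
    Continuous fun t => ofPair (f t) (g t) (h t) := by
  have hpair : Continuous fun t =>
      (⟨![f t, g t], h t⟩ : {v : Fin 2 → Fin (d + 1) → ℂ // LinearIndependent ℂ v}) :=
    Continuous.subtype_mk (by fun_prop) _
  have hspan :
      @Continuous {v : Fin 2 → Fin (d + 1) → ℂ // LinearIndependent ℂ v} (ProjLine d) _ _ fun p =>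
        ⟨span ℂ (Set.range p.1), by simpa using finrank_span_eq_card p.2⟩ :=
    continuous_coinduced_rng
  exact hspan.comp hpair

end ProjLine

namespace Picture

variable {G : Multigraph} {d : ℕ}

theorem ext {P Q : Picture G d} (hpt : P.pt = Q.pt) (hline : P.line = Q.line) : P = Q := by
  cases P; cases Q; cases hpt; cases hline; rfl

def ofVecs (p : G.V → Fin (d + 1) → ℂ) (q r : G.E → Fin (d + 1) → ℂ) (hp : ∀ v, p v ≠ 0)
    (hqr : ∀ e, LinearIndependent ℂ ![q e, r e])
    (hm : ∀ e, ∀ w ∈ G.ends e, p w ∈ span ℂ {q e, r e}) : Picture G d where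
  pt v := Projectivization.mk ℂ (p v) (hp v)
  line e := ProjLine.ofPair (q e) (r e) (hqr e)
  mem e w hw := by
    rw [memLine, Projectivization.submodule_mk, ProjLine.coe_ofPair, span_singleton_le_iff_mem]
    exact hm e w hw

theorem ofVecs_eq_ofVecs {p p' : G.V → Fin (d + 1) → ℂ} {q r q' r' : G.E → Fin (d + 1) → ℂ}
    {hp hqr hm hp' hqr' hm'} (hpt : ∀ v, ∃ s : ℂ, s • p v = p' v)
    (hline : ∀ e, span ℂ {q e, r e} = span ℂ {q' e, r' e}) :
    ofVecs p q r hp hqr hm = ofVecs p' q' r' hp' hqr' hm' := by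
  refine ext (funext fun v => ?_) (funext fun e => Subtype.ext ?_)
  · exact ((Projectivization.mk_eq_mk_iff' ℂ _ _ _ _).2 (hpt v)).symm
  · simp only [ofVecs, ProjLine.coe_ofPair, hline]

theorem joined_ofVecs (p : unitInterval → G.V → Fin (d + 1) → ℂ)
    (q r : unitInterval → G.E → Fin (d + 1) → ℂ) (hpc : Continuous p) (hqc : Continuous q)
    (hrc : Continuous r) (hp : ∀ t v, p t v ≠ 0) (hqr : ∀ t e, LinearIndependent ℂ ![q t e, r t e])
    (hm : ∀ t e, ∀ w ∈ G.ends e, p t w ∈ span ℂ {q t e, r t e}) :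
    Joined (ofVecs (p 0) (q 0) (r 0) (hp 0) (hqr 0) (hm 0))
      (ofVecs (p 1) (q 1) (r 1) (hp 1) (hqr 1) (hm 1)) := by
  refine ⟨⟨⟨fun t => ofVecs (p t) (q t) (r t) (hp t) (hqr t) (hm t), ?_⟩, rfl, rfl⟩⟩
  refine continuous_mk _ (continuous_pi fun v => ?_) (continuous_pi fun e => ?_)
  · exact ((continuous_apply v).comp hpc).projectivization_mk fun t => hp t v
  · exact ProjLine.continuous_ofPair ((continuous_apply e).comp hqc)
      ((continuous_apply e).comp hrc) fun t => hqr t e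

def pencil (u : Fin (d + 1) → ℂ) (c : G.E → Fin (d + 1) → ℂ) (hu : u ≠ 0)
    (hc : ∀ e, c e ∉ ℂ ∙ u) : Picture G d :=
  ofVecs (fun _ => u) (fun _ => u) c (fun _ => hu)
    (fun e => linearIndependent_pair_of_notMem_span hu (hc e))
    (fun _ _ _ => subset_span (Set.mem_insert _ _))

theorem joined_pencil {u u' : Fin (d + 1) → ℂ} {c c' : G.E → Fin (d + 1) → ℂ} {hu hc hu' hc'}
    (γ : Path u u') (δ : ∀ e, Path (c e) (c' e)) (hγ : ∀ t, γ t ≠ 0)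
    (hδ : ∀ t e, δ e t ∉ ℂ ∙ γ t) :
    Joined (pencil (G := G) u c hu hc) (pencil u' c' hu' hc') := by
  convert joined_ofVecs (fun t _ => γ t) (fun t _ => γ t) (fun t e => δ e t) (by fun_prop)
    (by fun_prop) (continuous_pi fun e => (δ e).continuous) (fun t _ => hγ t)
    (fun t e => linearIndependent_pair_of_notMem_span (hγ t) (hδ t e))
    (fun _ _ _ _ => subset_span (Set.mem_insert _ _)) <;> simp [pencil]

theorem joined_ofVecs_pencil {φ : Dual ℂ (Fin (d + 1) → ℂ)} {u : Fin (d + 1) → ℂ} (hu : φ u = 1)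
    {a : G.V → Fin (d + 1) → ℂ} {b c : G.E → Fin (d + 1) → ℂ} (ha : ∀ v, φ (a v) ≠ 0)
    (hb : ∀ e, φ (b e) ≠ 0) (hc : ∀ e, φ (c e) = 0) {ha₀ hbc hm} :
    ∃ hu₀ hcu, Joined (ofVecs a b c ha₀ hbc hm) (pencil u c hu₀ hcu) := by
  set A : ℂ → (Fin (d + 1) → ℂ) → Fin (d + 1) → ℂ := fun s x => (1 - s) • x + (s * φ x) • u
  have hφA : ∀ s x, φ (A s x) = φ x := fun s x => by
    simp only [A, map_add, map_smul, hu, smul_eq_mul]; ring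
  have hc₀ : ∀ e, c e ≠ 0 := fun e => by simpa using (hbc e).ne_zero 1
  have hu₀ : u ≠ 0 := fun h => by simp [h] at hu
  have hcu : ∀ e, c e ∉ ℂ ∙ u := fun e h => by
    obtain ⟨s, hs⟩ := mem_span_singleton.1 h
    have : s = 0 := by simpa [← hs, hu] using hc e
    exact hc₀ e (by rw [← hs, this, zero_smul])
  refine ⟨hu₀, hcu, ?_⟩
  let σ : unitInterval → ℂ := fun t => ((t : ℝ) : ℂ)
  convert joined_ofVecs (fun t v => A (σ t) (a v)) (fun t e => A (σ t) (b e)) (fun _ => c)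
    (by fun_prop) (by fun_prop) continuous_const
    (fun t v h => ha v (by rw [← hφA (σ t), h, map_zero]))
    (fun t e => linearIndependent_pair_of_dual (by rw [hφA]; exact hb e) (hc e) (hc₀ e))
    (fun t e w hw => ?_) using 1
  · exact ofVecs_eq_ofVecs (fun v => ⟨1, by simp [A, σ]⟩) (fun e => by simp [A, σ])
  · refine ofVecs_eq_ofVecs (fun v => ⟨φ (a v), by simp [A, σ]⟩) (fun e => ?_)
    simp [A, σ, span_insert, span_singleton_smul_eq (hb e).isUnit]
  · obtain ⟨m, n, hmn⟩ := mem_span_pair.1 (hm e w hw)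
    have hφa : φ (a w) = m * φ (b e) := by simp [← hmn, hc]
    -- `A s` is linear and multiplies `ker φ` by `1 - s`.
    refine mem_span_pair.2 ⟨m, n * (1 - σ t), ?_⟩
    simp only [A]
    rw [hφa, ← hmn]
    module

theorem exists_joined_pencil (P : Picture G d) :
    ∃ u c hu hc, Joined P (pencil u c hu hc) := by
  obtain ⟨φ, hφ⟩ := exists_dual_forall_apply_ne_zero (K := ℂ) (fun v => (P.pt v).rep)
    fun v => (P.pt v).rep_nonzero
  obtain ⟨v₀⟩ := G.nonemptyV
  set u := (φ (P.pt v₀).rep)⁻¹ • (P.pt v₀).rep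
  have hu : φ u = 1 := by simp [u, hφ v₀]
  set b : G.E → Fin (d + 1) → ℂ := fun e => (P.pt (G.ends e).out.1).rep
  have hbL : ∀ e, b e ∈ (P.line e).1 := fun e => (P.mem e _ (Sym2.out_fst_mem _)).rep_mem
  choose c hc hbc hspan using fun e => exists_span_pair_eq_of_dual (P.line e).2 (hbL e) (hφ _)
  have hm : ∀ e, ∀ w ∈ G.ends e, (P.pt w).rep ∈ span ℂ {b e, c e} :=
    fun e w hw => hspan e ▸ (P.mem e w hw).rep_mem
  have hP : P = ofVecs (fun v => (P.pt v).rep) b c (fun v => (P.pt v).rep_nonzero) hbc hm :=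
    ext (funext fun v => (Projectivization.mk_rep _).symm)
      (funext fun e => Subtype.ext (by rw [ofVecs, ProjLine.coe_ofPair, hspan]))
  obtain ⟨hu₀, hcu, hJ⟩ := joined_ofVecs_pencil hu hφ (fun e => hφ _) hc
    (ha₀ := fun v => (P.pt v).rep_nonzero) (hbc := hbc) (hm := hm)
  rw [← hP] at hJ
  exact ⟨u, c, hu₀, hcu, hJ⟩


theorem joined_pencil_const (hV : 2 ≤ finrank ℂ (Fin (d + 1) → ℂ)) {u z : Fin (d + 1) → ℂ}
    {c : G.E → Fin (d + 1) → ℂ} (hu : u ≠ 0) (hc : ∀ e, c e ∉ ℂ ∙ u) (hz : z ∉ ℂ ∙ u) :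
    Joined (pencil u c hu hc) (pencil u (fun _ => z) hu fun _ => hz) := by
  have hC := isPathConnected_compl_span_singleton hV u
  exact joined_pencil (Path.refl u) (fun e => (hC.joinedIn _ (hc e) _ hz).somePath)
    (fun _ => hu) (fun t e => (hC.joinedIn _ (hc e) _ hz).somePath_mem t)

theorem joined_pencil_const_pencil_const (hV : 2 ≤ finrank ℂ (Fin (d + 1) → ℂ))
    {u u' z : Fin (d + 1) → ℂ} (hu : u ≠ 0) (hu' : u' ≠ 0) (hz : z ∉ ℂ ∙ u) (hz' : z ∉ ℂ ∙ u') :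
    Joined (pencil (G := G) u (fun _ => z) hu fun _ => hz)
      (pencil u' (fun _ => z) hu' fun _ => hz') := by
  have hz₀ : z ≠ 0 := fun h => hz (h ▸ zero_mem _)
  have hC := isPathConnected_compl_span_singleton hV z
  have hJ := hC.joinedIn u (notMem_span_singleton_symm hu hz) u'
    (notMem_span_singleton_symm hu' hz')
  exact joined_pencil hJ.somePath (fun _ => Path.refl z)
    (fun t h => hJ.somePath_mem t (h ▸ zero_mem _))
    (fun t _ => notMem_span_singleton_symm hz₀ (hJ.somePath_mem t))

theorem joined_pencil_pencil (hV : 2 ≤ finrank ℂ (Fin (d + 1) → ℂ))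
    {u u' : Fin (d + 1) → ℂ} {c c' : G.E → Fin (d + 1) → ℂ} (hu : u ≠ 0) (hc : ∀ e, c e ∉ ℂ ∙ u)
    (hu' : u' ≠ 0) (hc' : ∀ e, c' e ∉ ℂ ∙ u') :
    Joined (pencil u c hu hc) (pencil u' c' hu' hc') := by
  obtain ⟨z, hz, hz'⟩ := exists_notMem_span_singleton_and hV u u'
  exact (joined_pencil_const hV hu hc hz).trans
    ((joined_pencil_const_pencil_const hV hu hu' hz hz').trans
      (joined_pencil_const hV hu' hc' hz').symm)

end Picture

/-- For every graph `G` and every integer `d ≥ 2`, the picture space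
`X^d(G)` is path-connected. -/
theorem picture_space_pathConnected (G : Multigraph) (d : ℕ) (hd : 2 ≤ d) :
    PathConnectedSpace (Picture G d) := by
  have hV : 2 ≤ finrank ℂ (Fin (d + 1) → ℂ) := by simp; omega
  obtain ⟨x, hx⟩ := exists_ne (0 : Fin (d + 1) → ℂ)
  obtain ⟨y, -, hy⟩ := SetLike.exists_of_lt (span_singleton_ne_top hV x).lt_top
  refine ⟨⟨Picture.pencil x (fun _ => y) hx fun _ => hy⟩, fun P Q => ?_⟩
  obtain ⟨u, c, hu, hc, hP⟩ := P.exists_joined_pencil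
  obtain ⟨u', c', hu', hc', hQ⟩ := Q.exists_joined_pencil
  exact hP.trans ((Picture.joined_pencil_pencil hV hu hc hu' hc').trans hQ.symm)
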